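/- Let m, n be coprime positive integers and let Ω = T·[0,1)² with T = [[1/n, m],[0, n]]. Then Ω is simultaneously a fundamental domain for each of the three lattices ℤ², D·ℤ² with D = diag(m/n, n/m), and T·ℤ² itself: the translates of Ω by each of these lattices partition ℝ² up to null sets. -/

import Mathlib

open MeasureTheory Set Matrix

noncomputable section

def latVec {d : ℕ} (M : Matrix (Fin d) (Fin d) ℝ) (k : Fin d → ℤ) :
    EuclideanSpace ℝ (Fin d) :=
  WithLp.toLp 2 (M.mulVec (fun i => (k i : ℝ)))

def trSet {d : ℕ} (v : EuclideanSpace ℝ (Fin d)) (Ω : Set (EuclideanSpace ℝ (Fin d))) :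
    Set (EuclideanSpace ℝ (Fin d)) :=
  (· + v) '' Ω

def IsPacking {d : ℕ} (M : Matrix (Fin d) (Fin d) ℝ)
    (Ω : Set (EuclideanSpace ℝ (Fin d))) : Prop :=
  ∀ k l : Fin d → ℤ, k ≠ l →
    volume (trSet (latVec M k) Ω ∩ trSet (latVec M l) Ω) = 0

def IsFundamentalDomain' {d : ℕ} (M : Matrix (Fin d) (Fin d) ℝ)
    (Ω : Set (EuclideanSpace ℝ (Fin d))) : Prop :=
  IsPacking M Ω ∧
    volume ((univ : Set (EuclideanSpace ℝ (Fin d))) \ ⋃ k : Fin d → ℤ, trSet (latVec M k) Ω) = 0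

def para (T : Matrix (Fin 2) (Fin 2) ℝ) : Set (EuclideanSpace ℝ (Fin 2)) :=
  (fun v : Fin 2 → ℝ => (WithLp.toLp 2 (T.mulVec v) : EuclideanSpace ℝ (Fin 2))) ''
    {v | ∀ i, v i ∈ Set.Ico (0 : ℝ) 1}

/-!
Writing `Ω = T·[0,1)²`, a point `x` lies in `Ω + M k` iff `T⁻¹x - (T⁻¹M) k ∈ [0,1)²`. For each of the
three lattices `T⁻¹M` has the shape `!![a, -b; 0, 1/a]` with `a > 0` and `gcd(a, b) = 1`: take
`(a, b) = (n, m)`, `(m, n)` and `(1, 0)`. The unit square is an exact fundamental domain for such a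
lattice: the first coordinate pins down `a k₀ - b k₁ = ⌊u₀⌋`, which fixes `k₁` modulo `a` by
coprimality, and the second coordinate confines `k₁` to a window of `a` consecutive integers.
-/

theorem existsUnique_mul_sub_mul_eq_of_mem_Ioc (a b S B : ℤ) (ha : 0 < a) (hab : IsCoprime a b) :
    ∃! k : Fin 2 → ℤ, a * k 0 - b * k 1 = S ∧ k 1 ∈ Ioc (B - a) B := by
  refine existsUnique_of_exists_of_unique ?_ fun k l ⟨hk, hk₁, hk₂⟩ ⟨hl, hl₁, hl₂⟩ => ?_
  · obtain ⟨u, v, huv⟩ := hab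
    -- the solutions are `(u S + b t, -v S + a t)`, and `t` is chosen to land in the window
    set t := (B + v * S) / a
    have h₀ := Int.emod_nonneg (B + v * S) ha.ne'
    have h₁ := Int.emod_lt_of_pos (B + v * S) ha
    have hdiv := Int.mul_ediv_add_emod (B + v * S) a
    refine ⟨![u * S + b * t, -v * S + a * t], ?_, ?_, ?_⟩ <;>
      simp only [cons_val_zero, cons_val_one, cons_val_fin_one]
    · linear_combination S * huv
    · linarith
    · linarith
  · have hdvd : a ∣ k 1 - l 1 :=
      hab.dvd_of_dvd_mul_left ⟨k 0 - l 0, by linear_combination hl - hk⟩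
    have h₁ : k 1 = l 1 := by
      have := Int.eq_zero_of_abs_lt_dvd hdvd (abs_sub_lt_iff.mpr ⟨by linarith, by linarith⟩)
      linarith
    have h₀ : k 0 = l 0 := by
      have : a * (k 0 - l 0) = 0 := by linear_combination hk - hl + b * h₁
      linarith [(mul_eq_zero.mp this).resolve_left ha.ne']
    ext i; fin_cases i <;> assumption

theorem sub_intCast_mem_Ico_zero_one_iff (r : ℝ) (z : ℤ) : r - z ∈ Ico (0 : ℝ) 1 ↔ ⌊r⌋ = z := by
  rw [Int.floor_eq_iff, mem_Ico]
  constructor <;> rintro ⟨h₁, h₂⟩ <;> constructor <;> linarith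

theorem sub_intCast_div_mem_Ico_zero_one_iff (r : ℝ) (a z : ℤ) (ha : 0 < a) :
    r - z / a ∈ Ico (0 : ℝ) 1 ↔ z ∈ Ioc (⌊a * r⌋ - a) ⌊a * r⌋ := by
  have ha' : (0 : ℝ) < a := Int.cast_pos.mpr ha
  rw [mem_Ioc, sub_lt_iff_lt_add, Int.floor_lt, Int.le_floor, mem_Ico, sub_nonneg, sub_lt_comm,
    div_le_iff₀ ha', lt_div_iff₀ ha']
  push_cast
  constructor <;> rintro ⟨h₁, h₂⟩ <;> constructor <;> linarith

def unitSquare : Set (Fin 2 → ℝ) := {v | ∀ i, v i ∈ Ico 0 1}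

theorem existsUnique_sub_mulVec_mem_unitSquare (a b : ℤ) (ha : 0 < a) (hab : IsCoprime a b)
    (u : Fin 2 → ℝ) :
    ∃! k : Fin 2 → ℤ, u - !![(a : ℝ), -b; 0, 1 / a] *ᵥ (fun i => (k i : ℝ)) ∈ unitSquare := by
  refine (existsUnique_congr fun k => ?_).mpr
    (existsUnique_mul_sub_mul_eq_of_mem_Ioc a b ⌊u 0⌋ ⌊a * u 1⌋ ha hab)
  have hk : !![(a : ℝ), -b; 0, 1 / a] *ᵥ (fun i => (k i : ℝ)) =
      ![((a * k 0 - b * k 1 : ℤ) : ℝ), k 1 / a] := by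
    ext i; fin_cases i <;> simp [mulVec, dotProduct, Fin.sum_univ_two] <;> ring
  simp only [hk, unitSquare, mem_ofPred_eq, Fin.forall_fin_two, Pi.sub_apply, cons_val_zero,
    cons_val_one, cons_val_fin_one, sub_intCast_mem_Ico_zero_one_iff,
    sub_intCast_div_mem_Ico_zero_one_iff _ _ _ ha, eq_comm]

theorem mem_para_iff {T : Matrix (Fin 2) (Fin 2) ℝ} (hT : IsUnit T.det)
    (y : EuclideanSpace ℝ (Fin 2)) : y ∈ para T ↔ T⁻¹ *ᵥ y.ofLp ∈ unitSquare := by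
  constructor
  · rintro ⟨w, hw, rfl⟩
    rwa [mulVec_mulVec, nonsing_inv_mul T hT, one_mulVec]
  · refine fun h => ⟨_, h, ?_⟩
    simp only [mulVec_mulVec, mul_nonsing_inv T hT, one_mulVec, WithLp.toLp_ofLp]

theorem mem_trSet_iff {d : ℕ} (v x : EuclideanSpace ℝ (Fin d))
    (Ω : Set (EuclideanSpace ℝ (Fin d))) : x ∈ trSet v Ω ↔ x - v ∈ Ω := by
  simp [trSet, sub_eq_add_neg]

theorem mem_trSet_latVec_mul_para_iff {T : Matrix (Fin 2) (Fin 2) ℝ} (hT : IsUnit T.det)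
    (A : Matrix (Fin 2) (Fin 2) ℝ) (x : EuclideanSpace ℝ (Fin 2)) (k : Fin 2 → ℤ) :
    x ∈ trSet (latVec (T * A) k) (para T) ↔
      T⁻¹ *ᵥ x.ofLp - A *ᵥ (fun i => (k i : ℝ)) ∈ unitSquare := by
  rw [mem_trSet_iff, mem_para_iff hT, latVec, WithLp.ofLp_sub, mulVec_sub, mulVec_mulVec,
    ← Matrix.mul_assoc, nonsing_inv_mul T hT, Matrix.one_mul]

theorem isFundamentalDomain'_of_existsUnique {d : ℕ} (M : Matrix (Fin d) (Fin d) ℝ)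
    (Ω : Set (EuclideanSpace ℝ (Fin d))) (h : ∀ x, ∃! k : Fin d → ℤ, x ∈ trSet (latVec M k) Ω) :
    IsFundamentalDomain' M Ω := by
  constructor
  · intro k l hkl
    suffices trSet (latVec M k) Ω ∩ trSet (latVec M l) Ω = ∅ by simp [this]
    exact eq_empty_of_forall_notMem fun x ⟨hk, hl⟩ => hkl ((h x).unique hk hl)
  · suffices univ \ ⋃ k, trSet (latVec M k) Ω = ∅ by simp [this]
    exact sdiff_eq_empty.mpr fun x _ => mem_iUnion.mpr (h x).exists

theorem isFundamentalDomain'_para (a b : ℤ) (ha : 0 < a) (hab : IsCoprime a b)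
    {T M : Matrix (Fin 2) (Fin 2) ℝ} (hT : IsUnit T.det)
    (hM : M = T * !![(a : ℝ), -b; 0, 1 / a]) : IsFundamentalDomain' M (para T) := by
  subst hM
  refine isFundamentalDomain'_of_existsUnique _ _ fun x => ?_
  simp only [mem_trSet_latVec_mul_para_iff hT]
  exact existsUnique_sub_mulVec_mem_unitSquare a b ha hab _

theorem parallelogram_common_fundamental_domain_three_lattices (m n : ℕ)
    (hm : 0 < m) (hn : 0 < n) (hmn : Nat.Coprime m n) :
    let T : Matrix (Fin 2) (Fin 2) ℝ := !![1 / (n : ℝ), (m : ℝ); 0, (n : ℝ)]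
    let D : Matrix (Fin 2) (Fin 2) ℝ := !![(m : ℝ) / (n : ℝ), 0; 0, (n : ℝ) / (m : ℝ)]
    IsFundamentalDomain' (1 : Matrix (Fin 2) (Fin 2) ℝ) (para T) ∧
      IsFundamentalDomain' D (para T) ∧
      IsFundamentalDomain' T (para T) := by
  intro T D
  have hm' : (m : ℝ) ≠ 0 := by positivity
  have hn' : (n : ℝ) ≠ 0 := by positivity
  have hT : IsUnit T.det := by simp [T, det_fin_two, hn']
  refine ⟨isFundamentalDomain'_para n m (by omega) ?_ hT ?_,
    isFundamentalDomain'_para m n (by omega) ?_ hT ?_,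
    isFundamentalDomain'_para 1 0 one_pos isCoprime_one_left hT ?_⟩
  · exact Nat.isCoprime_iff_coprime.mpr hmn.symm
  · ext i j; fin_cases i <;> fin_cases j <;> simp [T, hn']; ring
  · exact Nat.isCoprime_iff_coprime.mpr hmn
  · ext i j; fin_cases i <;> fin_cases j <;> simp [T, D, hm'] <;> field_simp; ring
  · simp only [Int.cast_one, Int.cast_zero, neg_zero, div_one, ← one_fin_two, Matrix.mul_one]
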